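/- Under the stated setup, assume in addition that k has characteristic zero, that A is finitely generated as a k-algebra with a ℤ-grading A = ⊕_{w ∈ ℤ} A_w satisfying A_w = 0 for w > 0, that there is a positive integer w_1 with ρ(ξ)(A_w) ⊆ A_{w + w_1} for all ξ ∈ 𝔲 and w ∈ ℤ, and that the derivations ρ(ξ), ρ(η) commute for all ξ, η ∈ 𝔲. Let 𝔲' ⊆ 𝔲 be a subspace with quotient q : 𝔲 → 𝔰 := 𝔲/𝔲', and suppose the composition of q* ⊗ id : 𝔰* ⊗_k A → 𝔲* ⊗_k A with the projection 𝔲* ⊗_k A → coker(φ) is an isomorphism. Let A^𝔲 := {a ∈ A : ρ(ξ)(a) = 0 for all ξ ∈ 𝔲}. Then φ factors through the canonical surjection Ω_{A/k} → Ω_{A/A^𝔲}, and the induced A-linear map Ω_{A/A^𝔲} → 𝔲* ⊗_k A is injective. -/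

import Mathlib

/-!
Fix a basis `b₁, …, bₘ` of `𝔲'`. Injectivity of the map `(𝔲/𝔲')* ⊗ A → coker φ` says that an
element of `A` killed by `𝔲'` is killed by all of `𝔲`. Surjectivity, followed by projection to
degree `0`, produces slices: elements `sⱼ` with `ρ(bᵢ) sⱼ = δᵢⱼ`. The derivations `ρ(bᵢ)` commute
and are locally nilpotent, since they raise the degree and `A` lives in degrees `≤ 0`. In
characteristic zero the Dixmier map `a ↦ ∑ (-1)ʲ/j! sʲ Dʲ a` of a locally nilpotent derivation `D`
with slice `s` lands in the constants of `D`, and applying it to one `ρ(bᵢ)` at a time gives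
`A = A^𝔲[s₁, …, sₘ]`. So `Ω_{A/A^𝔲}` is spanned by the `dsⱼ`, and their images `ξ ↦ ρ(ξ) sⱼ`
are `A`-linearly independent, being dual to the `bᵢ`.
-/

noncomputable section

variable {k A 𝔲 : Type*}
variable [Field k] [CommRing A] [Algebra k A]
variable [AddCommGroup 𝔲] [Module k 𝔲]

/-- The derivation `A → 𝔲* ⊗ₖ A` (with `𝔲* ⊗ₖ A` represented by `𝔲 →ₗ[k] A`)
sending `b` to `ξ ↦ ρ(ξ)(b)`. -/
def coactDer (ρ : 𝔲 →ₗ[k] Derivation k A A) : Derivation k A (𝔲 →ₗ[k] A) where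
  toLinearMap :=
    { toFun := fun b =>
        { toFun := fun ξ => ρ ξ b
          map_add' := fun ξ η => by simp
          map_smul' := fun c ξ => by simp }
      map_add' := fun b c => by ext ξ; simp
      map_smul' := fun c b => by ext ξ; simp }
  map_one_eq_zero' := by ext ξ; simp
  leibniz' := fun a b => by
    ext ξ
    simp [Derivation.leibniz, smul_eq_mul, mul_comm]

/-- The infinitesimal action `φ : Ω_{A/k} → 𝔲* ⊗ₖ A`, determined by
`φ(a db) = (ξ ↦ a · ρ(ξ)(b))`. -/
def phiDer (ρ : 𝔲 →ₗ[k] Derivation k A A) :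
    KaehlerDifferential k A →ₗ[A] (𝔲 →ₗ[k] A) :=
  (coactDer ρ).liftKaehlerDifferential

/-- Precomposition with the quotient map, `(𝔲/𝔲')* ⊗ₖ A → 𝔲* ⊗ₖ A`. -/
def precompQ (𝔲' : Submodule k 𝔲) : ((𝔲 ⧸ 𝔲') →ₗ[k] A) →ₗ[A] (𝔲 →ₗ[k] A) where
  toFun f := f.comp 𝔲'.mkQ
  map_add' f g := by ext v; simp
  map_smul' a f := by ext v; simp

/-- The invariants `A^𝔲 = {a ∈ A : ρ(ξ)(a) = 0 for all ξ ∈ 𝔲}`, as a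
`k`-subalgebra of `A`. -/
def invariants (ρ : 𝔲 →ₗ[k] Derivation k A A) : Subalgebra k A where
  carrier := {a | ∀ ξ : 𝔲, ρ ξ a = 0}
  mul_mem' := fun {a b} ha hb ξ => by
    rw [Derivation.leibniz]
    simp [ha ξ, hb ξ]
  one_mem' := fun ξ => by simp
  add_mem' := fun {a b} ha hb ξ => by simp [ha ξ, hb ξ]
  zero_mem' := fun ξ => by simp
  algebraMap_mem' := fun c ξ => by simp

open Finset DirectSum

namespace Derivation

def constants (D : Derivation k A A) : Subalgebra k A where
  carrier := {a | D a = 0}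
  mul_mem' {a b} ha hb := by simp_all [leibniz]
  one_mem' := map_one_eq_zero D
  add_mem' {a b} ha hb := by simp_all
  zero_mem' := map_zero D
  algebraMap_mem' c := map_algebraMap D c

@[simp]
lemma mem_constants {D : Derivation k A A} {a : A} : a ∈ D.constants ↔ D a = 0 := Iff.rfl

lemma mem_iInf_constants {ι : Type*} {D : ι → Derivation k A A} {t : Set ι} {a : A} :
    a ∈ ⨅ i ∈ t, (D i).constants ↔ ∀ i ∈ t, D i a = 0 := by
  simp only [Algebra.mem_iInf, mem_constants]

section Dixmier

variable (D : Derivation k A A) (s : A)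

lemma iterate_mem {Q : Subalgebra k A} (hQ : ∀ a ∈ Q, D a ∈ Q) {a : A} (ha : a ∈ Q) (j : ℕ) :
    (⇑D)^[j] a ∈ Q := by
  induction j with
  | zero => exact ha
  | succ j ih => exact Function.iterate_succ_apply' (⇑D) j a ▸ hQ _ ih

variable (k) in
def dixmierCoeff (j : ℕ) : k := (-1) ^ j / (j.factorial : k)

/-- Truncation at `n` of the Dixmier map of `D` with respect to `s`; when `D s = 1` and
`D^[n + 1] a = 0` it is a constant of `D` congruent to `a` modulo `s`. -/
def dixmierSum (a : A) (n : ℕ) : A :=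
  ∑ j ∈ range (n + 1), dixmierCoeff k j • (s ^ j * (⇑D)^[j] a)

lemma dixmierCoeff_succ_mul [CharZero k] (j : ℕ) :
    dixmierCoeff k (j + 1) * (j + 1) = -dixmierCoeff k j := by
  have : (j.factorial : k) ≠ 0 := Nat.cast_ne_zero.mpr j.factorial_ne_zero
  simp only [dixmierCoeff, Nat.factorial_succ, pow_succ]
  push_cast
  field_simp

lemma dixmierSum_succ (a : A) (n : ℕ) :
    dixmierSum D s a (n + 1) =
      dixmierSum D s a n + dixmierCoeff k (n + 1) • (s ^ (n + 1) * (⇑D)^[n + 1] a) :=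
  sum_range_succ _ _

lemma map_dixmierSum [CharZero k] (hs : D s = 1) (a : A) (n : ℕ) :
    D (dixmierSum D s a n) = dixmierCoeff k n • (s ^ n * (⇑D)^[n + 1] a) := by
  induction n with
  | zero => simp [dixmierSum, dixmierCoeff]
  | succ n ih =>
    have hcancel : dixmierCoeff k (n + 1) • ((⇑D)^[n + 1] a * ((n + 1 : A) * s ^ n)) =
        -(dixmierCoeff k n • (s ^ n * (⇑D)^[n + 1] a)) := by
      rw [← neg_smul, ← dixmierCoeff_succ_mul, mul_smul, add_smul, one_smul,
        Nat.cast_smul_eq_nsmul, nsmul_eq_mul]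
      ring_nf
    rw [dixmierSum_succ, map_add, ih, map_smul, leibniz, leibniz_pow, hs,
      ← Function.iterate_succ_apply' (⇑D)]
    simp only [smul_eq_mul, nsmul_eq_mul, mul_one, Nat.add_sub_cancel, Nat.cast_add,
      Nat.cast_one, smul_add, hcancel]
    abel

lemma dixmierSum_mem {Q : Subalgebra k A} (hQ : ∀ a ∈ Q, D a ∈ Q) (hsQ : s ∈ Q) {a : A}
    (ha : a ∈ Q) (n : ℕ) : dixmierSum D s a n ∈ Q :=
  sum_mem fun j _ => Q.smul_mem (Q.mul_mem (Q.pow_mem hsQ j) (iterate_mem D hQ ha j)) _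

lemma self_eq_dixmierSum_sub (a : A) (n : ℕ) :
    a = dixmierSum D s a n -
      ∑ j ∈ range n, dixmierCoeff k (j + 1) • (s ^ (j + 1) * (⇑D)^[j + 1] a) := by
  simp [dixmierSum, sum_range_succ', dixmierCoeff]

theorem mem_of_iterate_eq_zero [CharZero k] (hs : D s = 1) {Q S : Subalgebra k A}
    (hQ : ∀ a ∈ Q, D a ∈ Q) (hsQ : s ∈ Q) (hsS : s ∈ S) (hconst : Q ⊓ D.constants ≤ S)
    (n : ℕ) : ∀ a ∈ Q, (⇑D)^[n] a = 0 → a ∈ S := by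
  induction n with
  | zero =>
    intro a _ ha
    exact (show a = 0 from ha) ▸ S.zero_mem
  | succ n ih =>
    intro a ha hDa
    have hdix : dixmierSum D s a n ∈ S := by
      refine hconst ⟨dixmierSum_mem D s hQ hsQ ha n, ?_⟩
      change D _ = 0
      rw [map_dixmierSum D s hs, hDa, mul_zero, smul_zero]
    have htail (j : ℕ) : (⇑D)^[n] ((⇑D)^[j + 1] a) = 0 := by
      rw [← Function.iterate_add_apply, show n + (j + 1) = j + (n + 1) by ring,
        Function.iterate_add_apply, hDa, iterate_map_zero]
    rw [self_eq_dixmierSum_sub D s a n]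
    exact sub_mem hdix <| sum_mem fun j _ =>
      S.smul_mem (S.mul_mem (S.pow_mem hsS _) (ih _ (iterate_mem D hQ ha _) (htail j))) _

end Dixmier

theorem adjoin_range_eq_top_of_slices [CharZero k] {ι : Type*} [Fintype ι] [DecidableEq ι]
    (D : ι → Derivation k A A) (s : ι → A) (hcomm : ∀ i j a, D i (D j a) = D j (D i a))
    (hnil : ∀ i a, ∃ n, (⇑(D i))^[n] a = 0) (hs : ∀ i j, D i (s j) = if i = j then 1 else 0)
    (R : Subalgebra k A) (hR : ∀ a, (∀ i, D i a = 0) → a ∈ R) :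
    Algebra.adjoin R (Set.range s) = ⊤ := by
  set S := (Algebra.adjoin R (Set.range s)).restrictScalars k
  have hRS (a : A) (ha : a ∈ R) : a ∈ S := Subalgebra.algebraMap_mem _ (⟨a, ha⟩ : R)
  have key (t : Finset ι) : ⨅ i ∈ (↑t : Set ι)ᶜ, (D i).constants ≤ S := by
    induction t using Finset.induction_on with
    | empty =>
      intro a ha
      exact hRS a (hR a fun i => mem_iInf_constants.1 ha i (by simp))
    | insert j t _ ih =>
      intro a ha
      obtain ⟨n, hn⟩ := hnil j a
      have hsS : s j ∈ S :=
        (Subalgebra.mem_restrictScalars k).2 (Algebra.subset_adjoin (Set.mem_range_self j))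
      refine (D j).mem_of_iterate_eq_zero (s j) (by simp [hs]) (S := S) ?_ ?_ hsS ?_ n a ha hn
      · intro b hb
        rw [mem_iInf_constants] at hb ⊢
        intro i hi
        rw [hcomm, hb i hi, map_zero]
      · rw [mem_iInf_constants]
        intro i hi
        rw [hs, if_neg]
        rintro rfl
        simp at hi
      · rintro b ⟨hbQ, hbj⟩
        refine ih (mem_iInf_constants.2 fun i hi => ?_)
        by_cases hij : i = j
        · exact hij ▸ hbj
        · exact mem_iInf_constants.1 hbQ i (by simp_all)
  exact eq_top_iff.2 fun a _ => key univ (mem_iInf_constants.2 fun i hi => absurd (mem_univ i) hi)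

end Derivation

section Shift

variable {M : Type*} [AddCommMonoid M] [Module k M] (𝒜 : ℤ → Submodule k M)
  {F : Type*} [FunLike F M M] {f : F} {d : ℤ}

lemma iterate_mem_of_shift (hf : ∀ w, ∀ a ∈ 𝒜 w, f a ∈ 𝒜 (w + d)) {w : ℤ} {a : M}
    (ha : a ∈ 𝒜 w) (n : ℕ) : (⇑f)^[n] a ∈ 𝒜 (w + n * d) := by
  induction n with
  | zero => simpa using ha
  | succ n ih =>
    rw [Function.iterate_succ_apply', Nat.cast_succ, add_one_mul, ← add_assoc]
    exact hf _ _ ih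

variable [Decomposition 𝒜] [AddMonoidHomClass F M M]

lemma coe_decompose_map_of_shift (hf : ∀ w, ∀ a ∈ 𝒜 w, f a ∈ 𝒜 (w + d)) (a : M) (w : ℤ) :
    f (decompose 𝒜 a w) = decompose 𝒜 (f a) (w + d) := by
  induction a using Decomposition.inductionOn 𝒜 with
  | zero => simp
  | @homogeneous v a =>
    by_cases hvw : v = w
    · subst hvw
      rw [decompose_of_mem_same 𝒜 a.2, decompose_of_mem_same 𝒜 (hf v a a.2)]
    · rw [decompose_of_mem_ne 𝒜 a.2 hvw, decompose_of_mem_ne 𝒜 (hf v a a.2) (by omega),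
        map_zero]
  | add a b ha hb =>
    simp only [decompose_add, DirectSum.add_apply, Submodule.coe_add, map_add, ha, hb]

theorem exists_iterate_eq_zero_of_shift (hpos : ∀ w, 0 < w → 𝒜 w = ⊥) (hd : 0 < d)
    (hf : ∀ w, ∀ a ∈ 𝒜 w, f a ∈ 𝒜 (w + d)) (a : M) : ∃ n, (⇑f)^[n] a = 0 := by
  suffices ∃ n, ∀ m, n ≤ m → (⇑f)^[m] a = 0 from this.imp fun n h => h n le_rfl
  induction a using Decomposition.inductionOn 𝒜 with
  | zero => exact ⟨0, fun m _ => iterate_map_zero f m⟩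
  | @homogeneous w a =>
    refine ⟨w.natAbs + 1, fun m hm => ?_⟩
    have hdeg : 0 < w + m * d := by
      have hm : (w.natAbs + 1 : ℤ) ≤ m := by exact_mod_cast hm
      have hw : -w ≤ w.natAbs := by omega
      nlinarith
    simpa [hpos _ hdeg] using iterate_mem_of_shift 𝒜 hf a.2 m
  | add a b ha hb =>
    obtain ⟨n, hn⟩ := ha
    obtain ⟨n', hn'⟩ := hb
    exact ⟨max n n', fun m hm => by
      rw [iterate_map_add, hn m (le_of_max_le_left hm), hn' m (le_of_max_le_right hm), add_zero]⟩

end Shift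

theorem coe_decompose_mul_zero_of_nonpos (𝒜 : ℤ → Submodule k A) [GradedAlgebra 𝒜]
    (hpos : ∀ w, 0 < w → 𝒜 w = ⊥) (a b : A) :
    (decompose 𝒜 (a * b) 0 : A) = decompose 𝒜 a 0 * decompose 𝒜 b 0 := by
  induction a using Decomposition.inductionOn 𝒜 with
  | zero => simp
  | @homogeneous u a =>
    rw [← add_neg_cancel u, coe_decompose_mul_add_of_left_mem 𝒜 a.2, add_neg_cancel]
    rcases lt_trichotomy u 0 with hu | rfl | hu
    · have hb : (decompose 𝒜 b (-u) : A) = 0 := by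
        simpa [hpos (-u) (by omega)] using (decompose 𝒜 b (-u)).2
      rw [hb, decompose_of_mem_ne 𝒜 a.2 hu.ne, mul_zero, zero_mul]
    · rw [neg_zero, decompose_of_mem_same 𝒜 a.2]
    · have ha : (a : A) = 0 := by simpa [hpos u hu] using a.2
      rw [ha, zero_mul, decompose_zero, DirectSum.zero_apply, ZeroMemClass.coe_zero, zero_mul]
  | add a a' ha ha' =>
    simp only [add_mul, decompose_add, DirectSum.add_apply, Submodule.coe_add, ha, ha']

section ExtendScalars

variable {M : Type*} [AddCommGroup M] [Module A M] [Module k M] (R : Subalgebra k A)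

def Derivation.extendScalarsOfVanishing (D : Derivation k A M) (hD : ∀ r ∈ R, D r = 0) :
    Derivation R A M :=
  Derivation.mk'
    { toFun := D
      map_add' := D.map_add
      map_smul' := fun r a => by
        rw [RingHom.id_apply, Subalgebra.smul_def, Subalgebra.smul_def, smul_eq_mul,
          D.leibniz, hD r r.2, smul_zero, add_zero] }
    D.leibniz

@[simp]
lemma Derivation.extendScalarsOfVanishing_apply (D : Derivation k A M) (hD : ∀ r ∈ R, D r = 0)
    (a : A) : D.extendScalarsOfVanishing R hD a = D a := rfl

lemma Derivation.liftKaehlerDifferential_extendScalarsOfVanishing_comp_map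
    [IsScalarTower k A M] (D : Derivation k A M) (hD : ∀ r ∈ R, D r = 0) :
    (D.extendScalarsOfVanishing R hD).liftKaehlerDifferential ∘ₗ
      KaehlerDifferential.map k R A A = D.liftKaehlerDifferential := by
  apply Derivation.liftKaehlerDifferential_unique
  ext a
  simp

end ExtendScalars

lemma KaehlerDifferential.span_D_image_eq_top_of_adjoin_eq_top {R S : Type*} [CommRing R]
    [CommRing S] [Algebra R S] {X : Set S} (hX : Algebra.adjoin R X = ⊤) :
    Submodule.span S (KaehlerDifferential.D R S '' X) = ⊤ := by
  rw [eq_top_iff, ← KaehlerDifferential.span_range_derivation, Submodule.span_le]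
  rintro _ ⟨x, rfl⟩
  have hx : x ∈ Algebra.adjoin R X := hX ▸ Algebra.mem_top
  induction hx using Algebra.adjoin_induction with
  | mem x hx => exact Submodule.subset_span ⟨x, hx, rfl⟩
  | algebraMap r => simp
  | add x y _ _ hx hy => exact (map_add (KaehlerDifferential.D R S) x y) ▸ add_mem hx hy
  | mul x y _ _ hx hy =>
    rw [Derivation.leibniz]
    exact add_mem (Submodule.smul_mem _ _ hy) (Submodule.smul_mem _ _ hx)

lemma LinearMap.injective_of_span_eq_top_of_linearIndependent {R M N ι : Type*} [CommRing R]
    [AddCommGroup M] [Module R M] [AddCommGroup N] [Module R N] [Fintype ι] (f : M →ₗ[R] N)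
    {v : ι → M} (hv : Submodule.span R (Set.range v) = ⊤) (hfv : LinearIndependent R (f ∘ v)) :
    Function.Injective f := by
  rw [← LinearMap.ker_eq_bot, eq_bot_iff]
  intro z hz
  have hz_span : z ∈ Submodule.span R (Set.range v) := hv ▸ Submodule.mem_top
  obtain ⟨c, rfl⟩ := (Submodule.mem_span_range_iff_exists_fun R).1 hz_span
  have hc : c = 0 := funext <| Fintype.linearIndependent_iff.1 hfv c <| by simpa using hz
  simp [hc]

lemma LinearMap.linearIndependent_of_apply_eq_ite {V ι : Type*} [AddCommGroup V] [Module k V]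
    [Fintype ι] [DecidableEq ι] {g : ι → V →ₗ[k] A} (b : ι → V)
    (hgb : ∀ i l, g i (b l) = if l = i then 1 else 0) : LinearIndependent A g := by
  refine Fintype.linearIndependent_iff.2 fun c hc l => ?_
  simpa [hgb] using LinearMap.congr_fun hc (b l)

section Invariants

variable (ρ : 𝔲 →ₗ[k] Derivation k A A)

@[simp]
lemma coactDer_apply (b : A) (ξ : 𝔲) : coactDer ρ b ξ = ρ ξ b := rfl

lemma phiDer_D (b : A) : phiDer ρ (KaehlerDifferential.D k A b) = coactDer ρ b :=
  (coactDer ρ).liftKaehlerDifferential_comp_D b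

lemma mem_invariants_of_forall_mem {𝔲' : Submodule k 𝔲}
    (hinj : Function.Injective ((LinearMap.range (phiDer ρ)).mkQ ∘ₗ precompQ (A := A) 𝔲'))
    {a : A} (ha : ∀ ξ ∈ 𝔲', ρ ξ a = 0) : a ∈ invariants ρ := by
  let g := 𝔲'.liftQ (coactDer ρ a) ha
  have hg : precompQ 𝔲' g = coactDer ρ a := LinearMap.ext fun ξ => rfl
  have hg0 : g = 0 := hinj <| by
    rw [map_zero, LinearMap.comp_apply, hg, Submodule.mkQ_apply, Submodule.Quotient.mk_eq_zero]
    exact ⟨_, phiDer_D ρ a⟩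
  intro ξ
  rw [← coactDer_apply, ← hg, hg0]
  rfl

variable (𝒜 : ℤ → Submodule k A) [GradedAlgebra 𝒜] (hpos : ∀ w : ℤ, 0 < w → 𝒜 w = ⊥)
  {w₁ : ℤ} (hw₁ : 0 < w₁) (hder : ∀ (ξ : 𝔲) (w : ℤ) (a : A), a ∈ 𝒜 w → ρ ξ a ∈ 𝒜 (w + w₁))
include hpos hw₁ hder

lemma exists_apply_eq_decompose_zero (x : KaehlerDifferential k A) :
    ∃ s : A, ∀ ξ, ρ ξ s = decompose 𝒜 (phiDer ρ x ξ) 0 := by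
  have hx : x ∈ Submodule.span A (Set.range (KaehlerDifferential.D k A)) := by
    rw [KaehlerDifferential.span_range_derivation]
    exact Submodule.mem_top
  induction hx using Submodule.span_induction with
  | mem _ hx =>
    obtain ⟨b, rfl⟩ := hx
    refine ⟨decompose 𝒜 b (-w₁), fun ξ => ?_⟩
    rw [coe_decompose_map_of_shift 𝒜 (hder ξ), neg_add_cancel, phiDer_D, coactDer_apply]
  | zero => exact ⟨0, fun ξ => by simp⟩
  | add x y _ _ hx hy =>
    obtain ⟨s, hs⟩ := hx
    obtain ⟨t, ht⟩ := hy
    exact ⟨s + t, fun ξ => by simp [hs, ht]⟩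
  | smul a x _ hx =>
    obtain ⟨s, hs⟩ := hx
    -- `ρ ξ` maps degree `0` into degree `w₁ > 0`, where `A` vanishes.
    have ha₀ (ξ : 𝔲) : ρ ξ (decompose 𝒜 a 0) = 0 := by
      rw [coe_decompose_map_of_shift 𝒜 (hder ξ), zero_add]
      simpa [hpos w₁ hw₁] using (decompose 𝒜 (ρ ξ a) w₁).2
    refine ⟨decompose 𝒜 a 0 * s, fun ξ => ?_⟩
    rw [Derivation.leibniz, ha₀, smul_zero, add_zero, smul_eq_mul, hs, map_smul,
      LinearMap.smul_apply, smul_eq_mul, coe_decompose_mul_zero_of_nonpos 𝒜 hpos]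

lemma exists_apply_eq_algebraMap {𝔲' : Submodule k 𝔲}
    (hsurj : Function.Surjective ((LinearMap.range (phiDer ρ)).mkQ ∘ₗ precompQ (A := A) 𝔲'))
    (f : 𝔲' →ₗ[k] k) : ∃ s : A, ∀ ξ : 𝔲', ρ ξ s = algebraMap k A (f ξ) := by
  obtain ⟨F, hF⟩ := LinearMap.exists_extend f
  obtain ⟨g, hg⟩ := hsurj ((LinearMap.range (phiDer ρ)).mkQ (Algebra.linearMap k A ∘ₗ F))
  obtain ⟨x, hx⟩ :
      Algebra.linearMap k A ∘ₗ F - precompQ 𝔲' g ∈ LinearMap.range (phiDer ρ) := by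
    rw [← Submodule.Quotient.eq]
    exact hg.symm
  obtain ⟨s, hs⟩ := exists_apply_eq_decompose_zero ρ 𝒜 hpos hw₁ hder x
  refine ⟨s, fun ξ => ?_⟩
  have hgξ : precompQ 𝔲' g ξ = 0 := by
    simp [precompQ, (Submodule.Quotient.mk_eq_zero 𝔲').2 ξ.2]
  rw [hs, hx, LinearMap.sub_apply, hgξ, sub_zero, LinearMap.comp_apply, ← hF,
    Algebra.linearMap_apply, decompose_of_mem_same 𝒜 (SetLike.algebraMap_mem_graded 𝒜 _)]
  rfl

end Invariants

theorem statement10 [CharZero k] [FiniteDimensional k 𝔲]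
    (ρ : 𝔲 →ₗ[k] Derivation k A A)
    (𝒜 : ℤ → Submodule k A) [GradedAlgebra 𝒜]
    (hneg : ∀ w : ℤ, 0 < w → 𝒜 w = ⊥)
    (w₁ : ℤ) (hw₁ : 0 < w₁)
    (hder : ∀ (ξ : 𝔲) (w : ℤ) (a : A), a ∈ 𝒜 w → ρ ξ a ∈ 𝒜 (w + w₁))
    (hcomm : ∀ ξ η : 𝔲, ∀ a : A, ρ ξ (ρ η a) = ρ η (ρ ξ a))
    (𝔲' : Submodule k 𝔲)
    (hiso : Function.Bijective
      ⇑((LinearMap.range (phiDer ρ)).mkQ ∘ₗ precompQ (A := A) 𝔲')) :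
    ∃ ψ : KaehlerDifferential ↥(invariants ρ) A →ₗ[A] (𝔲 →ₗ[k] A),
      ψ ∘ₗ KaehlerDifferential.map k ↥(invariants ρ) A A = phiDer ρ ∧
      Function.Injective ⇑ψ := by
  classical
  let b := Module.finBasis k 𝔲'
  have hinv (a : A) (ha : ∀ i, ρ (b i) a = 0) : a ∈ invariants ρ :=
    mem_invariants_of_forall_mem ρ hiso.1 fun ξ hξ =>
      LinearMap.congr_fun (b.ext (f₁ := (coactDer ρ a).comp 𝔲'.subtype) (f₂ := 0) ha) ⟨ξ, hξ⟩
  choose s hs using fun i => exists_apply_eq_algebraMap ρ 𝒜 hneg hw₁ hder hiso.2 (b.coord i)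
  have hsb (i j) : ρ (b i) (s j) = if i = j then 1 else 0 := by
    rw [hs, b.coord_apply, b.repr_self, Finsupp.single_apply]
    split_ifs <;> simp
  have hgen : Algebra.adjoin (invariants ρ) (Set.range s) = ⊤ :=
    Derivation.adjoin_range_eq_top_of_slices (fun i => ρ (b i)) s (fun _ _ => hcomm _ _)
      (fun i => exists_iterate_eq_zero_of_shift 𝒜 hneg hw₁ (hder _)) hsb _ hinv
  refine ⟨((coactDer ρ).extendScalarsOfVanishing (invariants ρ)
      fun r hr => LinearMap.ext fun ξ => hr ξ).liftKaehlerDifferential,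
    Derivation.liftKaehlerDifferential_extendScalarsOfVanishing_comp_map _ _ _, ?_⟩
  refine LinearMap.injective_of_span_eq_top_of_linearIndependent _
    (v := fun i => KaehlerDifferential.D _ A (s i)) ?_ ?_
  · rw [Set.range_comp', ← KaehlerDifferential.span_D_image_eq_top_of_adjoin_eq_top hgen]
  · exact LinearMap.linearIndependent_of_apply_eq_ite (fun i => (b i : 𝔲))
      fun i l => by simpa using hsb l i
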